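/- arXiv:2511.05159 — 6 statements merged into one kernel-verified Lean document; each statement's English description precedes it below -/
import Mathlib

section
/- Let H be a real inner product space, let φ_1,…,φ_n ∈ H, let w_{ij} ≥ 0 for 1 ≤ i < j ≤ n and γ ≥ 0, and let F be the KCC objective. If (u*_1,…,u*_n) ∈ H^n is a global minimizer of F, then u*_i ∈ span{φ_1,…,φ_n} for every i = 1,…,n; that is, for each i there exists α_i ∈ ℝ^n with u*_i = ∑_{j=1}^n (α_i)_j φ_j. -/
open scoped RealInnerProductSpace BigOperators

/-- If `(u*_1,…,u*_n)` is a global minimizer of the KCC objective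
`F(u) = (1/2)∑ ‖φ_i − u_i‖² + γ ∑_{i<j} w_{ij} ‖u_i − u_j‖`, then each `u*_i`
lies in the span of `φ_1,…,φ_n`, i.e. is a linear combination `∑_j (α_i)_j φ_j`. -/
theorem kcc_minimizer_mem_span
    {H : Type*} [NormedAddCommGroup H] [InnerProductSpace ℝ H]
    (n : ℕ) (φ : Fin n → H) (w : Fin n → Fin n → ℝ) (γ : ℝ)
    (hw : ∀ i j : Fin n, i < j → 0 ≤ w i j) (hγ : 0 ≤ γ)
    (F : (Fin n → H) → ℝ)
    (hF : ∀ u : Fin n → H,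
      F u = (1 / 2) * ∑ i, ‖φ i - u i‖ ^ 2
        + γ * ∑ i, ∑ j ∈ Finset.Ioi i, w i j * ‖u i - u j‖)
    (ustar : Fin n → H)
    (hmin : ∀ u : Fin n → H, F ustar ≤ F u) :
    ∀ i : Fin n, ∃ α : Fin n → ℝ, ustar i = ∑ j, α j • φ j := by
  set S : Submodule ℝ H := Submodule.span ℝ (Set.range φ) with hS
  haveI : FiniteDimensional ℝ S := FiniteDimensional.span_of_finite ℝ (Set.finite_range φ)
  set v : Fin n → H := fun i => (Submodule.orthogonalProjection S (ustar i) : H) with hv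
  have hvS : ∀ i, v i ∈ S := fun i => (Submodule.orthogonalProjection S (ustar i)).2
  have hφS : ∀ i, φ i ∈ S := fun i => Submodule.subset_span ⟨i, rfl⟩
  -- Pythagoras: ‖φ i - ustar i‖² = ‖φ i - v i‖² + ‖ustar i - v i‖²
  have hpyth : ∀ i, ‖φ i - ustar i‖ ^ 2 = ‖φ i - v i‖ ^ 2 + ‖ustar i - v i‖ ^ 2 := by
    intro i
    have hd : ustar i - v i ∈ Sᗮ := S.sub_starProjection_mem_orthogonal (ustar i)
    have ha : φ i - v i ∈ S := Submodule.sub_mem S (hφS i) (hvS i)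
    have hinner : ⟪φ i - v i, ustar i - v i⟫ = 0 := hd (φ i - v i) ha
    have : φ i - ustar i = (φ i - v i) - (ustar i - v i) := by abel
    rw [this, norm_sub_sq_real, hinner]
    ring
  -- contraction: ‖v i - v j‖ ≤ ‖ustar i - ustar j‖
  have hlip : ∀ i j, ‖v i - v j‖ ≤ ‖ustar i - ustar j‖ := by
    intro i j
    have : v i - v j = (Submodule.orthogonalProjection S (ustar i - ustar j) : H) := by
      simp [hv, map_sub]
    rw [this]
    have h1 := (Submodule.orthogonalProjection S).le_opNorm (ustar i - ustar j)
    have h2 := Submodule.orthogonalProjectionOnto_norm_le S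
    calc ‖(Submodule.orthogonalProjection S (ustar i - ustar j) : H)‖
        = ‖Submodule.orthogonalProjection S (ustar i - ustar j)‖ := rfl
      _ ≤ ‖ustar i - ustar j‖ :=
          h1.trans (by nlinarith [norm_nonneg (ustar i - ustar j)])
  -- compare F v with F ustar
  have key : ∑ i, ‖ustar i - v i‖ ^ 2 ≤ 0 := by
    have h1 : ∑ i, ‖φ i - v i‖ ^ 2 + ∑ i, ‖ustar i - v i‖ ^ 2
        = ∑ i, ‖φ i - ustar i‖ ^ 2 := by
      rw [← Finset.sum_add_distrib]
      exact Finset.sum_congr rfl fun i _ => (hpyth i).symm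
    have h2 : γ * ∑ i, ∑ j ∈ Finset.Ioi i, w i j * ‖v i - v j‖
        ≤ γ * ∑ i, ∑ j ∈ Finset.Ioi i, w i j * ‖ustar i - ustar j‖ := by
      apply mul_le_mul_of_nonneg_left _ hγ
      apply Finset.sum_le_sum
      intro i _
      apply Finset.sum_le_sum
      intro j hj
      exact mul_le_mul_of_nonneg_left (hlip i j) (hw i j (Finset.mem_Ioi.mp hj))
    have hm := hmin v
    rw [hF v, hF ustar] at hm
    nlinarith [hm, h2, h1]
  have hzero : ∀ i, ustar i = v i := by
    intro i
    have hnn : ∀ i ∈ Finset.univ, (0:ℝ) ≤ ‖ustar i - v i‖ ^ 2 :=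
      fun i _ => sq_nonneg _
    have := (Finset.sum_eq_zero_iff_of_nonneg hnn).mp
      (le_antisymm key (Finset.sum_nonneg hnn)) i (Finset.mem_univ i)
    have h0 : ‖ustar i - v i‖ = 0 := by nlinarith [norm_nonneg (ustar i - v i)]
    exact sub_eq_zero.mp (norm_eq_zero.mp h0)
  intro i
  have hmem : ustar i ∈ S := hzero i ▸ hvS i
  rw [hS, Submodule.mem_span_range_iff_exists_fun] at hmem
  obtain ⟨c, hc⟩ := hmem
  exact ⟨c, hc.symm⟩
end

section
/- Let H be a real inner product space, let φ_1,…,φ_n ∈ H, let w_{ij} ≥ 0 for 1 ≤ i < j ≤ n and γ ≥ 0, let F be the KCC objective, let V = span{φ_1,…,φ_n}, and let P_V denote the orthogonal projection of H onto V. Then for all u_1,…,u_n ∈ H, F(P_V u_1,…,P_V u_n) ≤ F(u_1,…,u_n), with equality if and only if u_i ∈ V for every i. -/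
open scoped RealInnerProductSpace BigOperators

lemma kcc_aux_proj {H : Type*} [NormedAddCommGroup H] [InnerProductSpace ℝ H]
    (V : Submodule ℝ H) [V.HasOrthogonalProjection] (x : H) :
    ‖(V.orthogonalProjectionOnto x : H)‖ ≤ ‖x‖ ∧
      (‖(V.orthogonalProjectionOnto x : H)‖ = ‖x‖ ↔ x ∈ V) := by
  set p : H := (V.orthogonalProjectionOnto x : H) with hp
  have hmem : p ∈ V := (V.orthogonalProjectionOnto x).2
  have horth : x - p ∈ Vᗮ := Submodule.sub_starProjection_mem_orthogonal x
  have hinner : ⟪p, x - p⟫ = 0 := (Submodule.mem_orthogonal _ _).1 horth p hmem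
  have hpyth : ‖x‖ ^ 2 = ‖p‖ ^ 2 + ‖x - p‖ ^ 2 := by
    have h := norm_add_sq_real p (x - p)
    rw [add_sub_cancel] at h
    rw [h, hinner]; ring
  have hle : ‖p‖ ≤ ‖x‖ := by
    have := sq_nonneg (‖x - p‖)
    nlinarith [norm_nonneg p, norm_nonneg x]
  refine ⟨hle, ?_, ?_⟩
  · intro h
    rw [h] at hpyth
    have h0 : ‖x - p‖ ^ 2 = 0 := by linarith
    have h1 : x - p = 0 := by
      simpa using (pow_eq_zero_iff (n := 2) (by norm_num)).1 h0
    have hxp : x = p := sub_eq_zero.1 h1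
    rw [hxp]; exact hmem
  · intro h
    have : p = x := (Submodule.starProjection_eq_self_iff).2 h
    rw [this]

/-- Projecting all arguments of the KCC objective onto `V = span{φ_1,…,φ_n}`
does not increase the objective, with equality iff all `u_i` already lie in `V`. -/
theorem kcc_projection_decreases
    {H : Type*} [NormedAddCommGroup H] [InnerProductSpace ℝ H]
    (n : ℕ) (φ : Fin n → H) (w : Fin n → Fin n → ℝ) (γ : ℝ)
    (hw : ∀ i j : Fin n, i < j → 0 ≤ w i j) (hγ : 0 ≤ γ)
    (F : (Fin n → H) → ℝ)
    (hF : ∀ u : Fin n → H,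
      F u = (1 / 2) * ∑ i, ‖φ i - u i‖ ^ 2
        + γ * ∑ i, ∑ j ∈ Finset.Ioi i, w i j * ‖u i - u j‖)
    (V : Submodule ℝ H) (hV : V = Submodule.span ℝ (Set.range φ))
    [V.HasOrthogonalProjection]
    (u : Fin n → H) :
    F (fun i => (V.orthogonalProjectionOnto (u i) : H)) ≤ F u ∧
      (F (fun i => (V.orthogonalProjectionOnto (u i) : H)) = F u ↔ ∀ i, u i ∈ V) := by
  set P : H → H := fun x => (V.orthogonalProjectionOnto x : H) with hP
  have hφV : ∀ i, φ i ∈ V := by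
    intro i
    rw [hV]
    exact Submodule.subset_span ⟨i, rfl⟩
  have hPsub : ∀ a b : H, P (a - b) = P a - P b := by
    intro a b; simp [hP, map_sub]
  have hPfix : ∀ x : H, x ∈ V → P x = x := fun x hx =>
    (Submodule.starProjection_eq_self_iff).2 hx
  -- key pointwise facts
  have key1 : ∀ i, φ i - P (u i) = P (φ i - u i) := by
    intro i
    rw [hPsub, hPfix _ (hφV i)]
  have key2 : ∀ i j, P (u i) - P (u j) = P (u i - u j) := by
    intro i j; rw [hPsub]
  have t1 : ∀ i, ‖φ i - P (u i)‖ ≤ ‖φ i - u i‖ := by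
    intro i; rw [key1]; exact (kcc_aux_proj V _).1
  have t2 : ∀ i j, ‖P (u i) - P (u j)‖ ≤ ‖u i - u j‖ := by
    intro i j; rw [key2]; exact (kcc_aux_proj V _).1
  set A1 : ℝ := ∑ i, ‖φ i - P (u i)‖ ^ 2 with hA1
  set B1 : ℝ := ∑ i, ‖φ i - u i‖ ^ 2 with hB1
  set A2 : ℝ := ∑ i, ∑ j ∈ Finset.Ioi i, w i j * ‖P (u i) - P (u j)‖ with hA2
  set B2 : ℝ := ∑ i, ∑ j ∈ Finset.Ioi i, w i j * ‖u i - u j‖ with hB2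
  have h1le : ∀ i ∈ Finset.univ, ‖φ i - P (u i)‖ ^ 2 ≤ ‖φ i - u i‖ ^ 2 := by
    intro i _
    exact pow_le_pow_left₀ (norm_nonneg _) (t1 i) 2
  have hA1B1 : A1 ≤ B1 := Finset.sum_le_sum h1le
  have hA2B2 : A2 ≤ B2 := by
    apply Finset.sum_le_sum
    intro i _
    apply Finset.sum_le_sum
    intro j hj
    exact mul_le_mul_of_nonneg_left (t2 i j) (hw i j (Finset.mem_Ioi.1 hj))
  have hFP : F (fun i => (V.orthogonalProjectionOnto (u i) : H)) = (1 / 2) * A1 + γ * A2 := hF _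
  have hFu : F u = (1 / 2) * B1 + γ * B2 := hF _
  have hγA : γ * A2 ≤ γ * B2 := mul_le_mul_of_nonneg_left hA2B2 hγ
  constructor
  · rw [hFP, hFu]; linarith
  constructor
  · intro heq
    rw [hFP, hFu] at heq
    have hA1eq : A1 = B1 := by linarith
    have hterm := (Finset.sum_eq_sum_iff_of_le h1le).1 hA1eq
    intro i
    have h2 : ‖φ i - P (u i)‖ ^ 2 = ‖φ i - u i‖ ^ 2 := hterm i (Finset.mem_univ i)
    have hn : ‖φ i - P (u i)‖ = ‖φ i - u i‖ := by
      have := sq_nonneg (‖φ i - P (u i)‖ - ‖φ i - u i‖)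
      nlinarith [norm_nonneg (φ i - P (u i)), norm_nonneg (φ i - u i)]
    rw [key1] at hn
    have hmem : φ i - u i ∈ V := (kcc_aux_proj V _).2.1 hn
    have := V.sub_mem (hφV i) hmem
    simpa using this
  · intro hall
    have : (fun i => (V.orthogonalProjectionOnto (u i) : H)) = u := by
      funext i; exact hPfix _ (hall i)
    rw [this]
end

section
/- Let E be a real inner product space and n ≥ 2. Let V_α ∈ ℝ^n with ‖V_α‖ = 1 and V_β ∈ ℝ^{n×(n−1)} with V_αᵀ V_β = 0. Suppose φ_1,…,φ_n ∈ E satisfy φ_i = (V_α)_i a₀ + ∑_{k=1}^{n−1} (V_β)_{ik} b₀_k + ε_i for some a₀ ∈ E, b₀ = (b₀_1,…,b₀_{n−1}) ∈ E^{n−1}, and ε_1,…,ε_n ∈ E. Let Q : E^{n−1} → ℝ be any function and suppose (â, b̂) ∈ E × E^{n−1} is a global minimizer of (a,b) ↦ ∑_{i=1}^n ‖φ_i − (V_α)_i a − ∑_{k=1}^{n−1} (V_β)_{ik} b_k‖² + Q(b). Then â = a₀ + ∑_{i=1}^n (V_α)_i ε_i. -/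
open scoped BigOperators

/-- In the decomposition `φ_i = (V_α)_i a₀ + ∑_k (V_β)_{ik} b₀_k + ε_i`, with `V_α` a unit
vector orthogonal to the columns of `V_β`, the `a`-component of any global minimizer of
`(a,b) ↦ ∑ ‖φ_i − (V_α)_i a − ∑_k (V_β)_{ik} b_k‖² + Q(b)` satisfies
`â = a₀ + ∑_i (V_α)_i ε_i`. -/
theorem alpha_component_of_minimizer
    {E : Type*} [NormedAddCommGroup E] [InnerProductSpace ℝ E]
    (n : ℕ) (hn : 2 ≤ n)
    (Vα : Fin n → ℝ) (hVα : ∑ i, (Vα i) ^ 2 = 1)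
    (Vβ : Matrix (Fin n) (Fin (n - 1)) ℝ)
    (horth : ∀ k, ∑ i, Vα i * Vβ i k = 0)
    (φ : Fin n → E) (a₀ : E) (b₀ : Fin (n - 1) → E) (ε : Fin n → E)
    (hφ : ∀ i, φ i = Vα i • a₀ + (∑ k, Vβ i k • b₀ k) + ε i)
    (Q : (Fin (n - 1) → E) → ℝ)
    (ahat : E) (bhat : Fin (n - 1) → E)
    (hmin : ∀ (a : E) (b : Fin (n - 1) → E),
      (∑ i, ‖φ i - Vα i • ahat - ∑ k, Vβ i k • bhat k‖ ^ 2) + Q bhat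
        ≤ (∑ i, ‖φ i - Vα i • a - ∑ k, Vβ i k • b k‖ ^ 2) + Q b) :
    ahat = a₀ + ∑ i, Vα i • ε i := by
  set r : Fin n → E := fun i => φ i - ∑ k, Vβ i k • bhat k with hr
  set c : E := ∑ i, Vα i • r i with hc
  -- key expansion
  have key : ∀ a : E, (∑ i, ‖r i - Vα i • a‖ ^ 2)
      = ‖a - c‖ ^ 2 + ((∑ i, ‖r i‖ ^ 2) - ‖c‖ ^ 2) := by
    intro a
    have h1 : ∀ i, ‖r i - Vα i • a‖ ^ 2
        = ‖r i‖ ^ 2 - 2 * (Vα i * inner ℝ (r i) a) + (Vα i) ^ 2 * ‖a‖ ^ 2 := by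
      intro i
      rw [@norm_sub_sq_real, real_inner_smul_right, norm_smul]
      simp [mul_pow, sq_abs]
    have h2 : (∑ i, Vα i * inner ℝ (r i) a) = (inner ℝ c a : ℝ) := by
      rw [hc, sum_inner]
      exact Finset.sum_congr rfl fun i _ => (real_inner_smul_left (r i) a (Vα i)).symm
    rw [Finset.sum_congr rfl fun i _ => h1 i]
    rw [Finset.sum_add_distrib, Finset.sum_sub_distrib, ← Finset.sum_mul,
      ← Finset.mul_sum, h2, hVα, @norm_sub_sq_real, real_inner_comm]
    ring
  -- the minimization at b = bhat
  have hmin' : ∀ a : E, (∑ i, ‖r i - Vα i • ahat‖ ^ 2) ≤ ∑ i, ‖r i - Vα i • a‖ ^ 2 := by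
    intro a
    have := hmin a bhat
    have hre : ∀ (x : E) i, φ i - Vα i • x - ∑ k, Vβ i k • bhat k = r i - Vα i • x := by
      intro x i; rw [hr]; beta_reduce; abel
    simpa [hre ahat, hre a] using this
  have hac : ahat = c := by
    have := hmin' c
    rw [key ahat, key c] at this
    simp at this
    have : ‖ahat - c‖ ^ 2 ≤ 0 := by simpa using this
    have h0 : ‖ahat - c‖ = 0 := by nlinarith [norm_nonneg (ahat - c)]
    exact sub_eq_zero.mp (norm_eq_zero.mp h0)
  rw [hac, hc]
  have : ∀ i, Vα i • r i
      = (Vα i)^2 • a₀ + Vα i • ε i + ∑ k, (Vα i * (Vβ i k)) • (b₀ k - bhat k) := by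
    intro i
    have hk : (∑ k, (Vα i * Vβ i k) • (b₀ k - bhat k))
        = Vα i • (∑ k, Vβ i k • b₀ k) - Vα i • (∑ k, Vβ i k • bhat k) := by
      rw [Finset.smul_sum, Finset.smul_sum, ← Finset.sum_sub_distrib]
      exact Finset.sum_congr rfl fun k _ => by simp [smul_sub, smul_smul]
    simp only [hr]
    rw [hφ i, hk, smul_sub, smul_add, smul_add, smul_smul, ← sq]
    abel
  rw [Finset.sum_congr rfl fun i _ => this i, Finset.sum_add_distrib,
    Finset.sum_add_distrib, ← Finset.sum_smul, hVα, one_smul,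
    Finset.sum_comm]
  have : ∀ k, (∑ i, (Vα i * Vβ i k) • (b₀ k - bhat k)) = 0 := by
    intro k
    rw [← Finset.sum_smul, horth k, zero_smul]
  rw [Finset.sum_congr rfl fun k _ => this k]
  simp
end

section
/- Let H be a real inner product space, let φ_1,…,φ_n ∈ H, let w_{ij} ≥ 0 for 1 ≤ i < j ≤ n and γ ≥ 0, and let F be the KCC objective. Then F attains a global minimum on H^n: there exists (u*_1,…,u*_n) ∈ H^n such that F(u*_1,…,u*_n) ≤ F(u_1,…,u_n) for all (u_1,…,u_n) ∈ H^n. -/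
open scoped BigOperators

set_option maxHeartbeats 1000000

/-- Orthogonal projection does not increase norms. -/
lemma kcc_proj_norm_le {H : Type*} [NormedAddCommGroup H] [InnerProductSpace ℝ H]
    (K : Submodule ℝ H) [CompleteSpace K] (x : H) :
    ‖(Submodule.orthogonalProjectionOnto K x : H)‖ ≤ ‖x‖ := by
  calc ‖(Submodule.orthogonalProjectionOnto K x : H)‖ = ‖Submodule.orthogonalProjectionOnto K x‖ := rfl
    _ ≤ ‖Submodule.orthogonalProjectionOnto K‖ * ‖x‖ := (Submodule.orthogonalProjectionOnto K).le_opNorm x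
    _ ≤ 1 * ‖x‖ := by
        have := Submodule.orthogonalProjectionOnto_norm_le K
        nlinarith [norm_nonneg x]
    _ = ‖x‖ := one_mul _

/-- The KCC objective attains a global minimum on `H^n`. -/
theorem kcc_minimizer_exists
    {H : Type*} [NormedAddCommGroup H] [InnerProductSpace ℝ H]
    (n : ℕ) (φ : Fin n → H) (w : Fin n → Fin n → ℝ) (γ : ℝ)
    (hw : ∀ i j : Fin n, i < j → 0 ≤ w i j) (hγ : 0 ≤ γ)
    (F : (Fin n → H) → ℝ)
    (hF : ∀ u : Fin n → H,
      F u = (1 / 2) * ∑ i, ‖φ i - u i‖ ^ 2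
        + γ * ∑ i, ∑ j ∈ Finset.Ioi i, w i j * ‖u i - u j‖) :
    ∃ ustar : Fin n → H, ∀ u : Fin n → H, F ustar ≤ F u := by
  classical
  set K : Submodule ℝ H := Submodule.span ℝ (Set.range φ) with hK
  haveI : FiniteDimensional ℝ K :=
    FiniteDimensional.span_of_finite ℝ (Set.finite_range φ)
  haveI : CompleteSpace K := FiniteDimensional.complete ℝ K
  set P := Submodule.orthogonalProjectionOnto K with hPdef
  -- the explicit objective on `K^n`
  set G : (Fin n → K) → ℝ := fun v =>
    (1 / 2) * ∑ i, ‖φ i - (v i : H)‖ ^ 2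
      + γ * ∑ i, ∑ j ∈ Finset.Ioi i, w i j * ‖(v i : H) - (v j : H)‖ with hGdef
  have hGF : ∀ v : Fin n → K, G v = F (fun i => (v i : H)) := fun v => (hF _).symm
  -- continuity of G
  have hGcont : Continuous G := by
    apply Continuous.add
    · exact continuous_const.mul (continuous_finset_sum _ fun i _ =>
        ((continuous_const.sub ((continuous_subtype_val).comp
          (continuous_apply i))).norm.pow 2))
    · exact continuous_const.mul (continuous_finset_sum _ fun i _ =>
        continuous_finset_sum _ fun j _ => continuous_const.mul
          (((continuous_subtype_val.comp (continuous_apply i)).sub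
            (continuous_subtype_val.comp (continuous_apply j))).norm))
  -- nonnegativity of the penalty term
  have hpen : ∀ x : Fin n → H,
      0 ≤ γ * ∑ i, ∑ j ∈ Finset.Ioi i, w i j * ‖x i - x j‖ := by
    intro x
    refine mul_nonneg hγ (Finset.sum_nonneg fun i _ => Finset.sum_nonneg fun j hj =>
      mul_nonneg (hw i j (Finset.mem_Ioi.mp hj)) (norm_nonneg _))
  -- a single-term lower bound for G
  have hGlb : ∀ (v : Fin n → K) (i : Fin n),
      (1 / 2) * ‖φ i - (v i : H)‖ ^ 2 ≤ G v := by
    intro v i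
    have h1 : ‖φ i - (v i : H)‖ ^ 2 ≤ ∑ j, ‖φ j - (v j : H)‖ ^ 2 :=
      Finset.single_le_sum (f := fun j => ‖φ j - (v j : H)‖ ^ 2)
        (fun j _ => sq_nonneg _) (Finset.mem_univ i)
    have h2 := hpen (fun i => (v i : H))
    simp only [hGdef]
    nlinarith
  -- constants
  set C : ℝ := ∑ i, ‖φ i‖ with hC
  set B : ℝ := (1 / 2) * ∑ i, ‖φ i‖ ^ 2 with hB
  have hBnn : 0 ≤ B := by
    have : (0:ℝ) ≤ ∑ i, ‖φ i‖ ^ 2 := Finset.sum_nonneg fun i _ => sq_nonneg _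
    positivity
  have hCnn : 0 ≤ C := Finset.sum_nonneg fun i _ => norm_nonneg _
  set R : ℝ := C + Real.sqrt (2 * B) with hR
  have hsq : 0 ≤ Real.sqrt (2 * B) := Real.sqrt_nonneg _
  have hRnn : 0 ≤ R := by positivity
  -- G at 0 equals B
  have hG0 : G 0 = B := by
    simp [hGdef, hB]
  -- minimize G on the closed ball of radius R
  have hcomp : IsCompact (Metric.closedBall (0 : Fin n → K) R) :=
    isCompact_closedBall _ _
  have hne : (Metric.closedBall (0 : Fin n → K) R).Nonempty :=
    ⟨0, Metric.mem_closedBall_self hRnn⟩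
  obtain ⟨vstar, hvmem, hvmin⟩ := hcomp.exists_isMinOn hne hGcont.continuousOn
  -- vstar globally minimizes G on K^n
  have hglobal : ∀ v : Fin n → K, G vstar ≤ G v := by
    intro v
    by_cases hv : ‖v‖ ≤ R
    · exact hvmin (mem_closedBall_zero_iff.mpr hv)
    · have : ¬ ∀ i, ‖v i‖ ≤ R := fun h => hv ((pi_norm_le_iff_of_nonneg hRnn).mpr h)
      push_neg at this
      obtain ⟨i, hi⟩ := this
      have hφC : ‖φ i‖ ≤ C :=
        Finset.single_le_sum (fun j _ => norm_nonneg (φ j)) (Finset.mem_univ i)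
      have hnorm : Real.sqrt (2 * B) ≤ ‖φ i - (v i : H)‖ := by
        have h1 : ‖(v i : H)‖ - ‖φ i‖ ≤ ‖φ i - (v i : H)‖ := by
          have := abs_norm_sub_norm_le ((v i : H)) (φ i)
          rw [norm_sub_rev] at this
          exact (abs_le.mp this).2.trans_eq rfl |>.trans (le_refl _) |>.trans (le_refl _)
        have hvi : ‖(v i : H)‖ = ‖v i‖ := rfl
        linarith [hi, hφC]
      have hsqle : 2 * B ≤ ‖φ i - (v i : H)‖ ^ 2 := by
        have := Real.sq_sqrt (by linarith : (0:ℝ) ≤ 2 * B)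
        nlinarith [norm_nonneg (φ i - (v i : H))]
      have hBle : B ≤ (1 / 2) * ‖φ i - (v i : H)‖ ^ 2 := by linarith
      have h0mem : (0 : Fin n → K) ∈ Metric.closedBall (0 : Fin n → K) R :=
        Metric.mem_closedBall_self hRnn
      calc G vstar ≤ G 0 := hvmin h0mem
        _ = B := hG0
        _ ≤ (1 / 2) * ‖φ i - (v i : H)‖ ^ 2 := hBle
        _ ≤ G v := hGlb v i
  -- projecting onto K does not increase F
  have hPφ : ∀ i, (P (φ i) : H) = φ i := fun i =>
    Submodule.starProjection_eq_self_iff.mpr (Submodule.subset_span ⟨i, rfl⟩)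
  have hproj : ∀ u : Fin n → H, F (fun i => (P (u i) : H)) ≤ F u := by
    intro u
    rw [hF, hF]
    have hterm1 : ∀ i, ‖φ i - (P (u i) : H)‖ ≤ ‖φ i - u i‖ := by
      intro i
      calc ‖φ i - (P (u i) : H)‖ = ‖(P (φ i) : H) - (P (u i) : H)‖ := by rw [hPφ i]
        _ = ‖(P (φ i - u i) : H)‖ := by rw [map_sub, Submodule.coe_sub]
        _ ≤ ‖φ i - u i‖ := kcc_proj_norm_le K _
    have hterm2 : ∀ i j, ‖(P (u i) : H) - (P (u j) : H)‖ ≤ ‖u i - u j‖ := by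
      intro i j
      calc ‖(P (u i) : H) - (P (u j) : H)‖ = ‖(P (u i - u j) : H)‖ := by
            rw [map_sub, Submodule.coe_sub]
        _ ≤ ‖u i - u j‖ := kcc_proj_norm_le K _
    refine add_le_add ?_ ?_
    · refine mul_le_mul_of_nonneg_left (Finset.sum_le_sum fun i _ => ?_) (by norm_num)
      exact pow_le_pow_left₀ (norm_nonneg _) (hterm1 i) 2
    · refine mul_le_mul_of_nonneg_left (Finset.sum_le_sum fun i _ =>
        Finset.sum_le_sum fun j hj => ?_) hγ
      exact mul_le_mul_of_nonneg_left (hterm2 i j) (hw i j (Finset.mem_Ioi.mp hj))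
  -- conclude
  refine ⟨fun i => (vstar i : H), fun u => ?_⟩
  calc F (fun i => (vstar i : H)) = G vstar := (hGF vstar).symm
    _ ≤ G (fun i => P (u i)) := hglobal _
    _ = F (fun i => (P (u i) : H)) := hGF _
    _ ≤ F u := hproj u
end

section
/- (Deterministic core of the finite-sample bound.) Let E be a real inner product space and n ≥ 2. Let u_1,…,u_n, ε_1,…,ε_n ∈ E and set φ_i = u_i + ε_i. Let w_{ij} ≥ w_min > 0 for all 1 ≤ i < j ≤ n, let γ ≥ 0 and γ' = γ/n, and let P(v_1,…,v_n) = ∑_{i<j} w_{ij}‖v_i − v_j‖. Let (û_1,…,û_n) be a global minimizer over E^n of G(v) = (1/2)∑_{i=1}^n ‖φ_i − v_i‖² + γ P(v). Let D ∈ ℝ^{N×n} with N = n(n−1)/2 be the pairwise-difference matrix whose row for the pair (i,j), i < j, is (e_i − e_j)ᵀ; suppose D = A V_βᵀ where A ∈ ℝ^{N×(n−1)} admits a left inverse A⁺ ∈ ℝ^{(n−1)×N} with A⁺A = I, V_β ∈ ℝ^{n×(n−1)} has orthonormal columns, and V_α ∈ ℝ^n is a unit vector orthogonal to every column of V_β.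 Assume (i) ‖∑_{i=1}^n (V_α)_i ε_i‖² ≤ σ²(1 + √(log n)) for some σ² ≥ 0, and (ii) ‖∑_{i=1}^n (V_β A⁺)_{it} ε_i‖ ≤ n w_min γ'/2 for every row index t = 1,…,N. Then (1/(2n)) ∑_{i=1}^n ‖û_i − u_i‖² ≤ (3γ'/2) ∑_{i<j} w_{ij} ‖u_i − u_j‖ + σ² (1/n + √(log n)/n). -/
open scoped BigOperators
open Matrix

open scoped RealInnerProductSpace
set_option maxHeartbeats 1000000

lemma ortho_rows {n m : ℕ} (h : m + 1 = n) (Vβ : Matrix (Fin n) (Fin m) ℝ) (Vα : Fin n → ℝ)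
    (hVβ : Vβᵀ * Vβ = 1) (hVα : ∑ i, (Vα i) ^ 2 = 1) (horth : ∀ k, ∑ i, Vα i * Vβ i k = 0) :
    ∀ i j, Vα i * Vα j + ∑ k, Vβ i k * Vβ j k = if i = j then (1:ℝ) else 0 := by
  set e : Fin m ⊕ Fin 1 ≃ Fin n := finSumFinEquiv.trans (finCongr h) with he
  set V : Matrix (Fin n) (Fin n) ℝ :=
    fun i j => Sum.elim (fun k => Vβ i k) (fun _ => Vα i) (e.symm j) with hV
  have hVe : ∀ (i : Fin n) (s : Fin m ⊕ Fin 1),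
      V i (e s) = Sum.elim (fun k => Vβ i k) (fun _ => Vα i) s := by
    intro i s; simp [hV]
  have h1 : Vᵀ * V = 1 := by
    ext a b
    obtain ⟨s, rfl⟩ := e.surjective a
    obtain ⟨t, rfl⟩ := e.surjective b
    simp only [Matrix.mul_apply, Matrix.transpose_apply, Matrix.one_apply, hVe,
      EmbeddingLike.apply_eq_iff_eq]
    rcases s with k | z <;> rcases t with l | z'
    · have := congrFun (congrFun hVβ k) l
      simpa [Matrix.mul_apply, Matrix.one_apply] using this
    · have := horth k
      simp only [Sum.elim_inl, Sum.elim_inr]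
      rw [if_neg (by simp)]
      rw [← this]; exact Finset.sum_congr rfl fun i _ => mul_comm _ _
    · have := horth l
      simp only [Sum.elim_inl, Sum.elim_inr]
      rw [if_neg (by simp)]
      exact this
    · simp only [Sum.elim_inr]
      rw [if_pos (by rw [Subsingleton.elim z z'])]
      simpa [sq] using hVα
  have h2 : V * Vᵀ = 1 := mul_eq_one_comm.mp h1
  intro i j
  have h3 := congrFun (congrFun h2 i) j
  rw [Matrix.mul_apply] at h3
  rw [← Equiv.sum_comp e (fun a => V i a * Vᵀ a j)] at h3
  simp only [Matrix.transpose_apply, hVe, Fintype.sum_sum_type, Finset.univ_unique,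
    Finset.sum_const, Finset.card_singleton, one_smul, Sum.elim_inl, Sum.elim_inr,
    Matrix.one_apply] at h3
  rw [← h3]
  simp [add_comm]

lemma parseval_aux {E : Type*} [NormedAddCommGroup E] [InnerProductSpace ℝ E]
    {n m : ℕ} (Vα : Fin n → ℝ) (Vβ : Matrix (Fin n) (Fin m) ℝ)
    (hOrtho : ∀ i j, Vα i * Vα j + ∑ k, Vβ i k * Vβ j k = if i = j then (1:ℝ) else 0)
    (x y : Fin n → E) :
    ∑ i, ⟪x i, y i⟫
      = ⟪∑ i, Vα i • x i, ∑ j, Vα j • y j⟫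
        + ∑ k, ⟪∑ i, Vβ i k • x i, ∑ j, Vβ j k • y j⟫ := by
  have h1 : ⟪∑ i, Vα i • x i, ∑ j, Vα j • y j⟫
      = ∑ i, ∑ j, (Vα i * Vα j) * ⟪x i, y j⟫ := by
    rw [sum_inner]
    refine Finset.sum_congr rfl fun i _ => ?_
    rw [inner_sum]
    refine Finset.sum_congr rfl fun j _ => ?_
    rw [real_inner_smul_left, real_inner_smul_right]; ring
  have h2 : ∀ k, ⟪∑ i, Vβ i k • x i, ∑ j, Vβ j k • y j⟫
      = ∑ i, ∑ j, (Vβ i k * Vβ j k) * ⟪x i, y j⟫ := by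
    intro k
    rw [sum_inner]
    refine Finset.sum_congr rfl fun i _ => ?_
    rw [inner_sum]
    refine Finset.sum_congr rfl fun j _ => ?_
    rw [real_inner_smul_left, real_inner_smul_right]; ring
  rw [h1]
  simp only [h2]
  have h3 : ∑ k, ∑ i, ∑ j, (Vβ i k * Vβ j k) * ⟪x i, y j⟫
      = ∑ i, ∑ j, (∑ k, Vβ i k * Vβ j k) * ⟪x i, y j⟫ := by
    rw [Finset.sum_comm]
    refine Finset.sum_congr rfl fun i _ => ?_
    rw [Finset.sum_comm]
    refine Finset.sum_congr rfl fun j _ => ?_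
    rw [Finset.sum_mul]
  rw [h3, ← Finset.sum_add_distrib]
  refine (Finset.sum_congr rfl fun i _ => ?_).symm
  rw [← Finset.sum_add_distrib]
  have h4 : ∀ j, (Vα i * Vα j) * ⟪x i, y j⟫ + (∑ k, Vβ i k * Vβ j k) * ⟪x i, y j⟫
      = (if i = j then (1:ℝ) else 0) * ⟪x i, y j⟫ := by
    intro j; rw [← add_mul, hOrtho]
  simp only [h4, ite_mul, one_mul, zero_mul, Finset.sum_ite_eq, Finset.mem_univ, if_pos]

lemma sum_pairs {n : ℕ} (f : Fin n → Fin n → ℝ) :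
    ∑ t : {p : Fin n × Fin n // p.1 < p.2}, f t.1.1 t.1.2 = ∑ i, ∑ j ∈ Finset.Ioi i, f i j := by
  rw [← Finset.sum_subtype (Finset.univ.filter fun p : Fin n × Fin n => p.1 < p.2)
      (by simp) (fun p => f p.1 p.2)]
  rw [Finset.sum_filter, Fintype.sum_prod_type]
  refine Finset.sum_congr rfl fun i _ => ?_
  rw [← Finset.sum_filter]
  refine Finset.sum_congr ?_ fun j _ => rfl
  ext j; simp

/-- Deterministic core of the finite-sample bound (Theorem 1 of the paper): under the
noise model `φ_i = u_i + ε_i`, if `û` minimizes the convex clustering objective, the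
pairwise-difference matrix factorizes as `D = A V_βᵀ` with `A⁺A = I`, `V_β` has
orthonormal columns, `V_α` is a unit vector orthogonal to the columns of `V_β`, and the
two noise events (i) `‖V_αᵀε‖² ≤ σ²(1 + √(log n))` and
(ii) `‖((V_βA⁺)ᵀε)_t‖ ≤ n·w_min·γ'/2` for all `t` hold, then
`(1/(2n))∑‖û_i − u_i‖² ≤ (3γ'/2)∑_{i<j} w_{ij}‖u_i − u_j‖ + σ²(1/n + √(log n)/n)`. -/
theorem kcc_finite_sample_bound_deterministic
    {E : Type*} [NormedAddCommGroup E] [InnerProductSpace ℝ E]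
    (n : ℕ) (hn : 2 ≤ n)
    (u ε φ : Fin n → E) (hφ : ∀ i, φ i = u i + ε i)
    (w : Fin n → Fin n → ℝ) (wmin : ℝ) (hwmin : 0 < wmin)
    (hw : ∀ i j : Fin n, i < j → wmin ≤ w i j)
    (γ γ' : ℝ) (hγ : 0 ≤ γ) (hγ' : γ' = γ / n)
    (uhat : Fin n → E)
    (hmin : ∀ v : Fin n → E,
      (1 / 2) * ∑ i, ‖φ i - uhat i‖ ^ 2
          + γ * ∑ i, ∑ j ∈ Finset.Ioi i, w i j * ‖uhat i - uhat j‖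
        ≤ (1 / 2) * ∑ i, ‖φ i - v i‖ ^ 2
          + γ * ∑ i, ∑ j ∈ Finset.Ioi i, w i j * ‖v i - v j‖)
    (D : Matrix {p : Fin n × Fin n // p.1 < p.2} (Fin n) ℝ)
    (hD : ∀ p : {p : Fin n × Fin n // p.1 < p.2},
      D p = Pi.single p.1.1 1 - Pi.single p.1.2 1)
    (A : Matrix {p : Fin n × Fin n // p.1 < p.2} (Fin (n - 1)) ℝ)
    (Aplus : Matrix (Fin (n - 1)) {p : Fin n × Fin n // p.1 < p.2} ℝ)
    (Vβ : Matrix (Fin n) (Fin (n - 1)) ℝ)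
    (Vα : Fin n → ℝ)
    (hfact : D = A * Vβᵀ)
    (hAplus : Aplus * A = 1)
    (hVβ : Vβᵀ * Vβ = 1)
    (hVα : ∑ i, (Vα i) ^ 2 = 1)
    (horth : ∀ k, ∑ i, Vα i * Vβ i k = 0)
    (σ2 : ℝ) (hσ2 : 0 ≤ σ2)
    (hib : ‖∑ i, Vα i • ε i‖ ^ 2 ≤ σ2 * (1 + Real.sqrt (Real.log n)))
    (hiib : ∀ t : {p : Fin n × Fin n // p.1 < p.2},
      ‖∑ i, (Vβ * Aplus) i t • ε i‖ ≤ (n : ℝ) * wmin * γ' / 2) :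
    (1 / (2 * (n : ℝ))) * ∑ i, ‖uhat i - u i‖ ^ 2
      ≤ (3 * γ' / 2) * ∑ i, ∑ j ∈ Finset.Ioi i, w i j * ‖u i - u j‖
        + σ2 * (1 / (n : ℝ) + Real.sqrt (Real.log n) / (n : ℝ)) := by
  classical
  have hn0 : (0:ℝ) < n := by exact_mod_cast (by omega : 0 < n)
  have hne : (n:ℝ) ≠ 0 := ne_of_gt hn0
  set δ : Fin n → E := fun i => uhat i - u i with hδ
  have hεδ : ∀ i, φ i - uhat i = ε i - δ i := by
    intro i; simp only [hφ i, hδ]; abel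
  set Pu := ∑ i, ∑ j ∈ Finset.Ioi i, w i j * ‖u i - u j‖ with hPu
  set Puh := ∑ i, ∑ j ∈ Finset.Ioi i, w i j * ‖uhat i - uhat j‖ with hPuh
  have hwnn : ∀ i j : Fin n, i < j → (0:ℝ) ≤ w i j := fun i j hij => le_trans hwmin.le (hw i j hij)
  have hPu0 : 0 ≤ Pu := Finset.sum_nonneg fun i _ => Finset.sum_nonneg fun j hj =>
    mul_nonneg (hwnn i j (Finset.mem_Ioi.mp hj)) (norm_nonneg _)
  have hPuh0 : 0 ≤ Puh := Finset.sum_nonneg fun i _ => Finset.sum_nonneg fun j hj =>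
    mul_nonneg (hwnn i j (Finset.mem_Ioi.mp hj)) (norm_nonneg _)
  -- Step A: basic optimality inequality
  have keyA : (1/2) * ∑ i, ‖δ i‖^2 + γ * Puh ≤ (∑ i, ⟪ε i, δ i⟫) + γ * Pu := by
    have h := hmin u
    have e1 : ∀ i, ‖φ i - uhat i‖^2 = ‖ε i‖^2 - 2 * ⟪ε i, δ i⟫ + ‖δ i‖^2 := by
      intro i; rw [hεδ i, norm_sub_sq_real]
    have e2 : ∀ i, ‖φ i - u i‖^2 = ‖ε i‖^2 := by
      intro i; rw [hφ i, show u i + ε i - u i = ε i from by abel]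
    simp only [e1, e2] at h
    rw [Finset.sum_add_distrib, Finset.sum_sub_distrib, ← Finset.mul_sum, ← hPu] at h
    linarith
  -- Step B: Vα is constant
  have hDrow : ∀ (p : {p : Fin n × Fin n // p.1 < p.2}) (x : Fin n → E),
      ∑ l, D p l • x l = x p.1.1 - x p.1.2 := by
    intro p x
    rw [hD p]
    simp [Pi.single_apply, sub_smul, ite_smul, Finset.sum_sub_distrib]
  have hconstlt : ∀ i j : Fin n, i < j → Vα i = Vα j := by
    intro i j hij
    have h1 : ∑ l, D ⟨(i,j), hij⟩ l * Vα l = 0 := by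
      rw [hfact]
      have e : ∀ l, (A * Vβᵀ) ⟨(i,j),hij⟩ l * Vα l
          = ∑ k, A ⟨(i,j),hij⟩ k * (Vβ l k * Vα l) := by
        intro l
        rw [Matrix.mul_apply, Finset.sum_mul]
        exact Finset.sum_congr rfl fun k _ => by rw [Matrix.transpose_apply]; ring
      simp only [e]
      rw [Finset.sum_comm]
      have e2 : ∀ k, ∑ l, Vβ l k * Vα l = 0 := by
        intro k; rw [← horth k]; exact Finset.sum_congr rfl fun l _ => mul_comm _ _
      simp only [← Finset.mul_sum, e2, mul_zero, Finset.sum_const_zero]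
    rw [hD] at h1
    simp only [Pi.sub_apply, Pi.single_apply, sub_mul, ite_mul, one_mul, zero_mul,
      Finset.sum_sub_distrib, Finset.sum_ite_eq', Finset.mem_univ, if_pos] at h1
    linarith
  have hconst : ∀ i j : Fin n, Vα i = Vα j := by
    intro i j
    rcases lt_trichotomy i j with h|h|h
    · exact hconstlt i j h
    · rw [h]
    · exact (hconstlt j i h).symm
  -- Step C: first-order condition along Vα
  have hb0 : ∑ i, Vα i • (φ i - uhat i) = 0 := by
    set b := ∑ i, Vα i • (φ i - uhat i) with hbdef
    have h := hmin (fun i => uhat i + Vα i • b)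
    have hpen : ∀ i j : Fin n, (uhat i + Vα i • b) - (uhat j + Vα j • b) = uhat i - uhat j := by
      intro i j; rw [hconst i j]; abel
    have hquad : ∀ i, ‖φ i - (uhat i + Vα i • b)‖^2
        = ‖φ i - uhat i‖^2 - 2 * (Vα i * ⟪φ i - uhat i, b⟫) + (Vα i)^2 * ‖b‖^2 := by
      intro i
      rw [show φ i - (uhat i + Vα i • b) = (φ i - uhat i) - Vα i • b from by abel,
        norm_sub_sq_real, real_inner_smul_right, norm_smul, mul_pow, Real.norm_eq_abs, sq_abs]
    have hsum1 : ∑ i, Vα i * ⟪φ i - uhat i, b⟫ = ‖b‖^2 := by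
      have e : ∀ i, Vα i * ⟪φ i - uhat i, b⟫ = ⟪Vα i • (φ i - uhat i), b⟫ :=
        fun i => (real_inner_smul_left _ _ _).symm
      simp only [e]
      rw [← sum_inner, ← hbdef, real_inner_self_eq_norm_sq]
    have hsum2 : ∑ i, (Vα i)^2 * ‖b‖^2 = ‖b‖^2 := by rw [← Finset.sum_mul, hVα, one_mul]
    simp only [hquad, hpen] at h
    rw [Finset.sum_add_distrib, Finset.sum_sub_distrib, ← Finset.mul_sum, hsum1, hsum2,
      ← hPuh] at h
    have hb2 : ‖b‖^2 ≤ 0 := by linarith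
    have : ‖b‖ = 0 := by nlinarith [norm_nonneg b]
    exact norm_eq_zero.mp this
  have haδ : ∑ i, Vα i • δ i = ∑ i, Vα i • ε i := by
    have h := hb0
    simp only [hεδ, smul_sub] at h
    rw [Finset.sum_sub_distrib] at h
    exact (sub_eq_zero.mp h).symm
  -- Step D: orthogonality relations for rows
  have hm : (n - 1) + 1 = n := by omega
  have hOrtho := ortho_rows hm Vβ Vα hVβ hVα horth
  have hdec1 := parseval_aux Vα Vβ hOrtho ε δ
  have hdec2 := parseval_aux Vα Vβ hOrtho δ δ
  -- Step F: bound the beta part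
  have hADV : ∀ (k : Fin (n-1)) (j : Fin n), Vβ j k = ∑ t, Aplus k t * D t j := by
    have hAD : Aplus * D = Vβᵀ := by rw [hfact, ← Matrix.mul_assoc, hAplus, Matrix.one_mul]
    intro k j
    have h := congrFun (congrFun hAD k) j
    rw [Matrix.mul_apply, Matrix.transpose_apply] at h
    exact h.symm
  have hbδ : ∀ k, (∑ i, Vβ i k • δ i)
      = ∑ t : {p : Fin n × Fin n // p.1 < p.2}, Aplus k t • (δ t.1.1 - δ t.1.2) := by
    intro k
    calc ∑ j, Vβ j k • δ j = ∑ j, ∑ t, (Aplus k t * D t j) • δ j := by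
          refine Finset.sum_congr rfl fun j _ => ?_
          rw [hADV k j, Finset.sum_smul]
      _ = ∑ t, ∑ j, (Aplus k t * D t j) • δ j := Finset.sum_comm
      _ = ∑ t, Aplus k t • ∑ j, D t j • δ j := by
          refine Finset.sum_congr rfl fun t _ => ?_
          rw [Finset.smul_sum]
          exact Finset.sum_congr rfl fun j _ => (mul_smul _ _ _)
      _ = ∑ t, Aplus k t • (δ t.1.1 - δ t.1.2) := by
          refine Finset.sum_congr rfl fun t _ => ?_
          rw [hDrow t δ]
  have hcε : ∀ t : {p : Fin n × Fin n // p.1 < p.2},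
      (∑ k, Aplus k t • ∑ i, Vβ i k • ε i) = ∑ i, (Vβ * Aplus) i t • ε i := by
    intro t
    calc ∑ k, Aplus k t • ∑ i, Vβ i k • ε i = ∑ k, ∑ i, (Aplus k t * Vβ i k) • ε i := by
          refine Finset.sum_congr rfl fun k _ => ?_
          rw [Finset.smul_sum]
          exact Finset.sum_congr rfl fun i _ => (smul_smul _ _ _)
      _ = ∑ i, ∑ k, (Aplus k t * Vβ i k) • ε i := Finset.sum_comm
      _ = ∑ i, (Vβ * Aplus) i t • ε i := by
          refine Finset.sum_congr rfl fun i _ => ?_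
          rw [Matrix.mul_apply, Finset.sum_smul]
          exact Finset.sum_congr rfl fun k _ => by rw [mul_comm]
  have hswap : ∑ k, ⟪∑ i, Vβ i k • ε i, ∑ j, Vβ j k • δ j⟫
      = ∑ t : {p : Fin n × Fin n // p.1 < p.2},
          ⟪∑ i, (Vβ * Aplus) i t • ε i, δ t.1.1 - δ t.1.2⟫ := by
    calc ∑ k, ⟪∑ i, Vβ i k • ε i, ∑ j, Vβ j k • δ j⟫
        = ∑ k, ∑ t : {p : Fin n × Fin n // p.1 < p.2},
            Aplus k t * ⟪∑ i, Vβ i k • ε i, δ t.1.1 - δ t.1.2⟫ := by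
          refine Finset.sum_congr rfl fun k _ => ?_
          rw [hbδ k, inner_sum]
          exact Finset.sum_congr rfl fun t _ => real_inner_smul_right _ _ _
      _ = ∑ t : {p : Fin n × Fin n // p.1 < p.2},
            ∑ k, Aplus k t * ⟪∑ i, Vβ i k • ε i, δ t.1.1 - δ t.1.2⟫ := Finset.sum_comm
      _ = ∑ t : {p : Fin n × Fin n // p.1 < p.2},
            ⟪∑ k, Aplus k t • ∑ i, Vβ i k • ε i, δ t.1.1 - δ t.1.2⟫ := by
          refine Finset.sum_congr rfl fun t _ => ?_
          rw [sum_inner]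
          exact Finset.sum_congr rfl fun k _ => (real_inner_smul_left _ _ _).symm
      _ = _ := by
          refine Finset.sum_congr rfl fun t _ => ?_
          rw [hcε t]
  have hγwm : (n:ℝ) * wmin * γ' / 2 = γ * wmin / 2 := by
    rw [hγ']; field_simp
  have hβ : ∑ k, ⟪∑ i, Vβ i k • ε i, ∑ j, Vβ j k • δ j⟫ ≤ (γ/2) * (Puh + Pu) := by
    rw [hswap]
    calc ∑ t : {p : Fin n × Fin n // p.1 < p.2},
            ⟪∑ i, (Vβ * Aplus) i t • ε i, δ t.1.1 - δ t.1.2⟫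
        ≤ ∑ t : {p : Fin n × Fin n // p.1 < p.2},
            (γ/2) * (w t.1.1 t.1.2 * ‖uhat t.1.1 - uhat t.1.2‖
              + w t.1.1 t.1.2 * ‖u t.1.1 - u t.1.2‖) := by
          refine Finset.sum_le_sum fun t _ => ?_
          have h1 : ⟪∑ i, (Vβ * Aplus) i t • ε i, δ t.1.1 - δ t.1.2⟫
              ≤ ‖∑ i, (Vβ * Aplus) i t • ε i‖ * ‖δ t.1.1 - δ t.1.2‖ := real_inner_le_norm _ _
          have h2 := hiib t
          rw [hγwm] at h2
          have h3 : ‖δ t.1.1 - δ t.1.2‖ ≤ ‖uhat t.1.1 - uhat t.1.2‖ + ‖u t.1.1 - u t.1.2‖ := by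
            rw [show δ t.1.1 - δ t.1.2
                = (uhat t.1.1 - uhat t.1.2) - (u t.1.1 - u t.1.2) from by simp only [hδ]; abel]
            exact norm_sub_le _ _
          have h4 := hw t.1.1 t.1.2 t.2
          have hA0 : (0:ℝ) ≤ ‖uhat t.1.1 - uhat t.1.2‖ := norm_nonneg _
          have hB0 : (0:ℝ) ≤ ‖u t.1.1 - u t.1.2‖ := norm_nonneg _
          calc ⟪∑ i, (Vβ * Aplus) i t • ε i, δ t.1.1 - δ t.1.2⟫
              ≤ ‖∑ i, (Vβ * Aplus) i t • ε i‖ * ‖δ t.1.1 - δ t.1.2‖ := h1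
            _ ≤ (γ * wmin / 2) * ‖δ t.1.1 - δ t.1.2‖ :=
                mul_le_mul_of_nonneg_right h2 (norm_nonneg _)
            _ ≤ (γ * wmin / 2) * (‖uhat t.1.1 - uhat t.1.2‖ + ‖u t.1.1 - u t.1.2‖) := by
                apply mul_le_mul_of_nonneg_left h3
                positivity
            _ ≤ (γ/2) * (w t.1.1 t.1.2 * ‖uhat t.1.1 - uhat t.1.2‖
                  + w t.1.1 t.1.2 * ‖u t.1.1 - u t.1.2‖) := by
                nlinarith [mul_nonneg (mul_nonneg hγ (sub_nonneg.mpr h4)) (add_nonneg hA0 hB0)]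
      _ = (γ/2) * (Puh + Pu) := by
          rw [← Finset.mul_sum]
          congr 1
          rw [Finset.sum_add_distrib,
            sum_pairs (fun i j => w i j * ‖uhat i - uhat j‖),
            sum_pairs (fun i j => w i j * ‖u i - u j‖), ← hPuh, ← hPu]
  -- Step G: combine everything
  have hnormsum : ∑ i, ⟪δ i, δ i⟫ = ∑ i, ‖δ i‖^2 :=
    Finset.sum_congr rfl fun i _ => real_inner_self_eq_norm_sq _
  rw [haδ, real_inner_self_eq_norm_sq] at hdec1
  rw [haδ, real_inner_self_eq_norm_sq, hnormsum] at hdec2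
  have hBδδ : 0 ≤ ∑ k, ⟪∑ i, Vβ i k • δ i, ∑ j, Vβ j k • δ j⟫ :=
    Finset.sum_nonneg fun k _ => real_inner_self_nonneg
  have hS : ∑ i, ‖δ i‖^2 ≤ 2*(σ2*(1+Real.sqrt (Real.log n))) + 3*γ*Pu := by
    have hγPuh : 0 ≤ γ * Puh := mul_nonneg hγ hPuh0
    linarith
  have hfin : (1/(2*(n:ℝ))) * ∑ i, ‖δ i‖^2
      ≤ (3*γ'/2) * Pu + σ2*(1/(n:ℝ) + Real.sqrt (Real.log n)/(n:ℝ)) := by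
    have heq : (3*γ'/2) * Pu + σ2*(1/(n:ℝ) + Real.sqrt (Real.log n)/(n:ℝ))
        = (1/(2*(n:ℝ))) * (2*(σ2*(1+Real.sqrt (Real.log n))) + 3*γ*Pu) := by
      rw [hγ']; field_simp; ring
    rw [heq]
    exact mul_le_mul_of_nonneg_left hS (by positivity)
  have hgoal : ∑ i, ‖uhat i - u i‖^2 = ∑ i, ‖δ i‖^2 := by simp only [hδ]
  rw [hgoal]
  exact hfin
end

section
/- Let H be a real inner product space, let φ_1,…,φ_n ∈ H, let K ∈ ℝ^{n×n} be the Gram matrix with entries K_{ij} = ⟨φ_i, φ_j⟩, and suppose Z ∈ ℝ^{n×n} is invertible with ZᵀZ = K. Let w_{ij} ≥ 0 for 1 ≤ i < j ≤ n and γ ≥ 0, let F be the KCC objective, and let F_CC(a_1,…,a_n) = (1/2)∑_{i=1}^n ‖Z e_i − a_i‖² + γ ∑_{i<j} w_{ij} ‖a_i − a_j‖ be the convex clustering objective of the embedded points z_i = Z e_i ∈ ℝ^n. Then (a*_1,…,a*_n) is a global minimizer of F_CC if and only if (u*_1,…,u*_n), defined by u*_i = ∑_{j=1}^n (Z⁻¹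 a*_i)_j φ_j, is a global minimizer of F over H^n. -/
open scoped RealInnerProductSpace BigOperators
open Matrix

noncomputable def kccTmap {H : Type*} [NormedAddCommGroup H] [InnerProductSpace ℝ H]
    (n : ℕ) (φ : Fin n → H) (Z : Matrix (Fin n) (Fin n) ℝ) : (Fin n → ℝ) →ₗ[ℝ] H where
  toFun a := ∑ j, (Z⁻¹ *ᵥ a) j • φ j
  map_add' a b := by
    simp [Matrix.mulVec_add, add_smul, Finset.sum_add_distrib]
  map_smul' c a := by
    simp [Matrix.mulVec_smul, Finset.smul_sum, smul_smul]

lemma kcc_dot_aux (n : ℕ) (Z : Matrix (Fin n) (Fin n) ℝ) (hZinv : IsUnit Z.det)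
    (a b : Fin n → ℝ) :
    (Z⁻¹ *ᵥ a) ⬝ᵥ ((Zᵀ * Z) *ᵥ (Z⁻¹ *ᵥ b)) = a ⬝ᵥ b := by
  rw [← Matrix.mulVec_mulVec (Z⁻¹ *ᵥ b) Zᵀ Z, Matrix.mulVec_mulVec b Z Z⁻¹,
    Matrix.mul_nonsing_inv _ hZinv, Matrix.one_mulVec,
    Matrix.dotProduct_mulVec, Matrix.vecMul_transpose,
    Matrix.mulVec_mulVec, Matrix.mul_nonsing_inv _ hZinv, Matrix.one_mulVec]

lemma kccTmap_inner {H : Type*} [NormedAddCommGroup H] [InnerProductSpace ℝ H]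
    (n : ℕ) (φ : Fin n → H) (K : Matrix (Fin n) (Fin n) ℝ)
    (hK : ∀ i j : Fin n, K i j = ⟪φ i, φ j⟫)
    (Z : Matrix (Fin n) (Fin n) ℝ) (hZinv : IsUnit Z.det) (hZ : Zᵀ * Z = K)
    (a b : Fin n → ℝ) :
    ⟪kccTmap n φ Z a, kccTmap n φ Z b⟫ = ∑ t, a t * b t := by
  have h := kcc_dot_aux n Z hZinv a b
  rw [hZ] at h
  show ⟪∑ j, (Z⁻¹ *ᵥ a) j • φ j, ∑ j, (Z⁻¹ *ᵥ b) j • φ j⟫ = ∑ t, a t * b t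
  rw [sum_inner]
  calc ∑ j, ⟪(Z⁻¹ *ᵥ a) j • φ j, ∑ k, (Z⁻¹ *ᵥ b) k • φ k⟫
      = ∑ j, (Z⁻¹ *ᵥ a) j * ∑ k, K j k * (Z⁻¹ *ᵥ b) k := by
        refine Finset.sum_congr rfl fun j _ => ?_
        rw [real_inner_smul_left, inner_sum]
        congr 1
        refine Finset.sum_congr rfl fun k _ => ?_
        rw [real_inner_smul_right, hK, mul_comm]
    _ = (Z⁻¹ *ᵥ a) ⬝ᵥ (K *ᵥ (Z⁻¹ *ᵥ b)) := by
        simp [dotProduct, Matrix.mulVec, dotProduct]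
    _ = a ⬝ᵥ b := h
    _ = ∑ t, a t * b t := rfl

lemma kccTmap_phi {H : Type*} [NormedAddCommGroup H] [InnerProductSpace ℝ H]
    (n : ℕ) (φ : Fin n → H)
    (Z : Matrix (Fin n) (Fin n) ℝ) (hZinv : IsUnit Z.det) (i : Fin n) :
    kccTmap n φ Z (Z *ᵥ Pi.single i 1) = φ i := by
  show ∑ j, (Z⁻¹ *ᵥ (Z *ᵥ Pi.single i 1)) j • φ j = φ i
  rw [Matrix.mulVec_mulVec, Matrix.nonsing_inv_mul _ hZinv, Matrix.one_mulVec]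
  simp [Pi.single_apply]

/-- With `K` the Gram matrix of `φ_1,…,φ_n` and `Z` invertible with `ZᵀZ = K`,
`(a*_1,…,a*_n)` globally minimizes the convex clustering objective of the embedded
points `z_i = Z e_i` (Euclidean norms on `ℝ^n`) if and only if
`u*_i = ∑_j (Z⁻¹ a*_i)_j φ_j` globally minimizes the KCC objective on `H^n`. -/
theorem kcc_equiv_convex_clustering_of_embedding
    {H : Type*} [NormedAddCommGroup H] [InnerProductSpace ℝ H]
    (n : ℕ) (φ : Fin n → H) (K : Matrix (Fin n) (Fin n) ℝ)
    (hK : ∀ i j : Fin n, K i j = ⟪φ i, φ j⟫)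
    (Z : Matrix (Fin n) (Fin n) ℝ) (hZinv : IsUnit Z.det) (hZ : Zᵀ * Z = K)
    (w : Fin n → Fin n → ℝ) (γ : ℝ)
    (hw : ∀ i j : Fin n, i < j → 0 ≤ w i j) (hγ : 0 ≤ γ)
    (F : (Fin n → H) → ℝ)
    (hF : ∀ u : Fin n → H,
      F u = (1 / 2) * ∑ i, ‖φ i - u i‖ ^ 2
        + γ * ∑ i, ∑ j ∈ Finset.Ioi i, w i j * ‖u i - u j‖)
    (Fcc : (Fin n → Fin n → ℝ) → ℝ)
    (hFcc : ∀ a : Fin n → Fin n → ℝ,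
      Fcc a = (1 / 2) * ∑ i, (∑ t, ((Z *ᵥ Pi.single i 1) t - a i t) ^ 2)
        + γ * ∑ i, ∑ j ∈ Finset.Ioi i,
            w i j * Real.sqrt (∑ t, (a i t - a j t) ^ 2))
    (astar : Fin n → Fin n → ℝ)
    (ustar : Fin n → H)
    (hustar : ∀ i, ustar i = ∑ j, (Z⁻¹ *ᵥ astar i) j • φ j) :
    (∀ a : Fin n → Fin n → ℝ, Fcc astar ≤ Fcc a)
      ↔ (∀ v : Fin n → H, F ustar ≤ F v) := by
  set T := kccTmap n φ Z with hT
  have hTinner := kccTmap_inner n φ K hK Z hZinv hZ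
  have hTnormsq : ∀ a : Fin n → ℝ, ‖T a‖ ^ 2 = ∑ t, (a t) ^ 2 := by
    intro a
    rw [← real_inner_self_eq_norm_sq, hTinner]
    exact Finset.sum_congr rfl fun t _ => (sq (a t)).symm
  have hTnorm : ∀ a : Fin n → ℝ, ‖T a‖ = Real.sqrt (∑ t, (a t) ^ 2) := by
    intro a
    rw [← hTnormsq, Real.sqrt_sq (norm_nonneg _)]
  have hTphi : ∀ i, T (Z *ᵥ Pi.single i 1) = φ i := kccTmap_phi n φ Z hZinv
  -- F of an embedded tuple equals Fcc
  have hFT : ∀ a : Fin n → Fin n → ℝ, F (fun i => T (a i)) = Fcc a := by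
    intro a
    rw [hF, hFcc]
    congr 1
    · congr 1
      refine Finset.sum_congr rfl fun i _ => ?_
      rw [← hTphi i, ← map_sub, hTnormsq]
      rfl
    · congr 1
      refine Finset.sum_congr rfl fun i _ => Finset.sum_congr rfl fun j _ => ?_
      rw [← map_sub, hTnorm]
      rfl
  have hustar' : ustar = fun i => T (astar i) := funext fun i => hustar i
  have hFustar : F ustar = Fcc astar := by rw [hustar', hFT]
  constructor
  · -- Fcc minimizer → F minimizer
    intro hmin v
    set S : Submodule ℝ H := LinearMap.range T with hS
    haveI : FiniteDimensional ℝ S := Module.Finite.range T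
    haveI : CompleteSpace S := FiniteDimensional.complete ℝ S
    set P : H →L[ℝ] S := S.orthogonalProjectionOnto with hP
    have hPle : ∀ x : H, ‖(P x : H)‖ ≤ ‖x‖ := by
      intro x
      calc ‖(P x : H)‖ = ‖P x‖ := (Submodule.norm_coe _)
        _ ≤ ‖P‖ * ‖x‖ := P.le_opNorm x
        _ ≤ 1 * ‖x‖ := by
            exact mul_le_mul_of_nonneg_right (Submodule.orthogonalProjectionOnto_norm_le S) (norm_nonneg x)
        _ = ‖x‖ := one_mul ‖x‖
    have hphiS : ∀ i, φ i ∈ S := fun i => ⟨Z *ᵥ Pi.single i 1, hTphi i⟩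
    have hPphi : ∀ i, ((P (φ i)) : H) = φ i := fun i =>
      Submodule.starProjection_eq_self_iff.mpr (hphiS i)
    -- choose coordinates of projections
    have hex : ∀ i, ∃ b : Fin n → ℝ, T b = (P (v i) : H) := fun i => (P (v i)).2
    choose b hb using hex
    have step1 : F (fun i => (P (v i) : H)) ≤ F v := by
      rw [hF, hF]
      apply add_le_add
      · apply mul_le_mul_of_nonneg_left _ (by norm_num : (0:ℝ) ≤ 1/2)
        refine Finset.sum_le_sum fun i _ => ?_
        have h1 : φ i - (P (v i) : H) = (P (φ i - v i) : H) := by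
          rw [map_sub]; push_cast; rw [hPphi]
        have h2 : ‖φ i - (P (v i) : H)‖ ≤ ‖φ i - v i‖ := by
          rw [h1]; exact hPle _
        exact pow_le_pow_left₀ (norm_nonneg _) h2 2
      · apply mul_le_mul_of_nonneg_left _ hγ
        refine Finset.sum_le_sum fun i _ => Finset.sum_le_sum fun j hj => ?_
        apply mul_le_mul_of_nonneg_left _ (hw i j (Finset.mem_Ioi.mp hj))
        have h1 : (P (v i) : H) - (P (v j) : H) = (P (v i - v j) : H) := by
          rw [map_sub]; push_cast; ring
        rw [h1]; exact hPle _
    calc F ustar = Fcc astar := hFustar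
      _ ≤ Fcc b := hmin b
      _ = F (fun i => T (b i)) := (hFT b).symm
      _ = F (fun i => (P (v i) : H)) := by
          congr 1; funext i; rw [hb]
      _ ≤ F v := step1
  · -- F minimizer → Fcc minimizer
    intro hmin a
    calc Fcc astar = F ustar := hFustar.symm
      _ ≤ F (fun i => T (a i)) := hmin _
      _ = Fcc a := hFT a
end
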